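/- arXiv:1904.12943 — 4 statements merged into one kernel-verified Lean document; each statement's English description precedes it below -/
import Mathlib

section
/- Let ν > 0, α ∈ ℤ with α > 0, and let R_{λ,α}(z,y) = (1/(μν))·((α−λ)/(λ+μ−α)) e^{−μ(y+z)} − (1/(ν(λ+μ−α))) e^{−αy−μz}, where μ = ν^{-1/2}√(λ + α²ν). Then the apparent pole of R_{λ,α} at λ = 0 (where μ = α) is removable: the residue lim_{λ→0} (λ + μ − α) R_{λ,α}(z,y) equals 0 for all y, z ≥ 0. -/
noncomputable section

/-- The residual part of the Stokes resolvent kernel. -/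
def Rker (ν : ℝ) (α : ℤ) (lam μ : ℂ) (z y : ℝ) : ℂ :=
  (1 / (μ * (ν : ℂ))) * (((α : ℂ) - lam) / (lam + μ - (α : ℂ))) *
      Complex.exp (-μ * ((y + z : ℝ) : ℂ))
    - (1 / ((ν : ℂ) * (lam + μ - (α : ℂ)))) *
      Complex.exp (-(α : ℂ) * (y : ℂ) - μ * (z : ℂ))

/-- `μ(λ) = ν^{-1/2}√(λ + α²ν)` (principal branch). -/
def muFun (ν : ℝ) (α : ℤ) (lam : ℂ) : ℂ :=
  ((lam + (α : ℂ) ^ 2 * (ν : ℂ)) / (ν : ℂ)) ^ ((1 : ℂ) / 2)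

/-! Multiplying by `λ + μ - α` clears the pole and leaves an expression continuous in `(λ, μ)`; at
`λ = 0`, `μ = α` its two terms `(α/(αν)) e^{-α(y+z)}` and `(1/ν) e^{-αy-αz}` cancel. -/

/-- `(λ + μ - α) R_{λ,α}(z,y)` with the factor `λ + μ - α` cancelled. -/
def clearedRker (ν : ℝ) (α : ℤ) (lam μ : ℂ) (z y : ℝ) : ℂ :=
  (1 / (μ * (ν : ℂ))) * ((α : ℂ) - lam) * Complex.exp (-μ * ((y + z : ℝ) : ℂ))
    - (1 / (ν : ℂ)) * Complex.exp (-(α : ℂ) * (y : ℂ) - μ * (z : ℂ))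

theorem mul_Rker_eq_clearedRker (ν : ℝ) (α : ℤ) (lam μ : ℂ) (z y : ℝ)
    (h : lam + μ - (α : ℂ) ≠ 0) :
    (lam + μ - (α : ℂ)) * Rker ν α lam μ z y = clearedRker ν α lam μ z y := by
  simp only [Rker, clearedRker, mul_sub, mul_inv, div_eq_mul_inv]
  congr 1 <;> field_simp

/-- Where `λ + μ - α = 0` the product is `0`, which spares showing that this factor is nonzero
near `λ = 0`. -/
theorem norm_mul_Rker_le (ν : ℝ) (α : ℤ) (lam μ : ℂ) (z y : ℝ) :
    ‖(lam + μ - (α : ℂ)) * Rker ν α lam μ z y‖ ≤ ‖clearedRker ν α lam μ z y‖ := by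
  by_cases h : lam + μ - (α : ℂ) = 0
  · simp [h]
  · rw [mul_Rker_eq_clearedRker ν α lam μ z y h]

theorem clearedRker_zero_self {ν : ℝ} (hν : ν ≠ 0) {α : ℤ} (hα : α ≠ 0) (z y : ℝ) :
    clearedRker ν α 0 α z y = 0 := by
  have hν' : (ν : ℂ) ≠ 0 := by exact_mod_cast hν
  have hα' : (α : ℂ) ≠ 0 := by exact_mod_cast hα
  have hexp : -(α : ℂ) * ((y + z : ℝ) : ℂ) = -(α : ℂ) * (y : ℂ) - (α : ℂ) * (z : ℂ) := by
    push_cast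
    ring
  rw [clearedRker, hexp]
  field_simp
  ring

theorem tendsto_mul_Rker_of_continuousAt {ν : ℝ} (hν : ν ≠ 0) {α : ℤ} (hα : α ≠ 0)
    {m : ℂ → ℂ} (hm : ContinuousAt m 0) (hm0 : m 0 = α) (z y : ℝ) :
    Filter.Tendsto (fun lam : ℂ => (lam + m lam - (α : ℂ)) * Rker ν α lam (m lam) z y)
      (nhds 0) (nhds 0) := by
  have hν' : (ν : ℂ) ≠ 0 := by exact_mod_cast hν
  have hα' : (α : ℂ) ≠ 0 := by exact_mod_cast hα
  have hcont : ContinuousAt (fun lam => clearedRker ν α lam (m lam) z y) 0 := by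
    unfold clearedRker
    refine ContinuousAt.sub (ContinuousAt.mul (ContinuousAt.mul ?_ ?_) ?_) ?_
    · exact continuousAt_const.div (hm.mul continuousAt_const) (by rw [hm0]; exact mul_ne_zero hα' hν')
    · fun_prop
    · exact (hm.neg.mul continuousAt_const).cexp
    · exact continuousAt_const.mul (continuousAt_const.sub (hm.mul continuousAt_const)).cexp
  have hlim := hcont.tendsto
  rw [hm0, clearedRker_zero_self hν hα] at hlim
  exact squeeze_zero_norm (fun lam => norm_mul_Rker_le ν α lam (m lam) z y) (tendsto_norm_zero.comp hlim)

theorem muFun_zero_base {ν : ℝ} (hν : ν ≠ 0) (α : ℤ) :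
    ((0 : ℂ) + (α : ℂ) ^ 2 * (ν : ℂ)) / (ν : ℂ) = (((α : ℝ) ^ 2 : ℝ) : ℂ) := by
  have hν' : (ν : ℂ) ≠ 0 := by exact_mod_cast hν
  push_cast
  field_simp
  ring

theorem muFun_zero {ν : ℝ} (hν : ν ≠ 0) {α : ℤ} (hα : 0 ≤ α) : muFun ν α 0 = α := by
  have hαR : (0 : ℝ) ≤ α := by exact_mod_cast hα
  rw [muFun, muFun_zero_base hν, show (1 : ℂ) / 2 = ((1 / 2 : ℝ) : ℂ) by norm_num,
    ← Complex.ofReal_cpow (sq_nonneg _), ← Real.sqrt_eq_rpow, Real.sqrt_sq hαR]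
  simp

theorem continuousAt_muFun_zero {ν : ℝ} (hν : ν ≠ 0) {α : ℤ} (hα : α ≠ 0) :
    ContinuousAt (muFun ν α) 0 := by
  have hν' : (ν : ℂ) ≠ 0 := by exact_mod_cast hν
  have hαR : (α : ℝ) ≠ 0 := by exact_mod_cast hα
  refine ContinuousAt.cpow (by fun_prop (disch := exact hν')) continuousAt_const ?_
  rw [muFun_zero_base hν]
  exact Complex.ofReal_mem_slitPlane.mpr (by positivity)

theorem residue_at_zero_vanishes_general (ν : ℝ) (hν : 0 < ν) (α : ℤ) (hα : 0 < α)
    (y z : ℝ) :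
    Filter.Tendsto
      (fun lam : ℂ => (lam + muFun ν α lam - (α : ℂ)) * Rker ν α lam (muFun ν α lam) z y)
      (nhdsWithin 0 {(0 : ℂ)}ᶜ) (nhds 0) :=
  (tendsto_mul_Rker_of_continuousAt hν.ne' hα.ne' (continuousAt_muFun_zero hν.ne' hα.ne')
    (muFun_zero hν.ne' hα.le) z y).mono_left nhdsWithin_le_nhds

/-- The apparent pole of `R_{λ,α}` at `λ = 0` is removable:
`lim_{λ→0} (λ + μ - α) R_{λ,α}(z,y) = 0`. -/
theorem residue_at_zero_vanishes (ν : ℝ) (hν : 0 < ν) (α : ℤ) (hα : 0 < α)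
    (y z : ℝ) (hy : 0 ≤ y) (hz : 0 ≤ z) :
    Filter.Tendsto
      (fun lam : ℂ => (lam + muFun ν α lam - (α : ℂ)) * Rker ν α lam (muFun ν α lam) z y)
      (nhdsWithin 0 {(0 : ℂ)}ᶜ) (nhds 0) :=
  residue_at_zero_vanishes_general ν hν α hα y z
end
end

section
/- Let ν > 0, α ∈ ℝ with α > 0, and μ ∈ ℂ with Re μ > 0, and set λ = ν(μ² − α²). If |μ − α| ≥ α/2, then |(α−λ)/(λ+μ−α)| ≤ 1 + (1 + α/|μ−α|) · 1/|ν(μ+α)+1| ≤ 4. -/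
/-!
Writing `λ = ν(μ² - α²)`, the denominator factors as
`λ + μ - α = (μ - α) (ν(μ + α) + 1)` and the numerator is `μ - (λ + μ - α)`, so the quotient is
`-1 + μ / ((μ - α)(ν(μ + α) + 1))`. Since `Re (ν(μ + α) + 1) ≥ 1` and `|μ| ≤ |μ - α| + α`,
this gives the first bound; the second follows from `α / |μ - α| ≤ 2` and `1 / |ν(μ+α)+1| ≤ 1`.
-/

lemma norm_sub_div_le_one_add {𝕜 : Type*} [NormedField 𝕜] (a b : 𝕜) :
    ‖(a - b) / b‖ ≤ 1 + ‖a‖ / ‖b‖ := by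
  rcases eq_or_ne b 0 with rfl | hb
  · simp
  · calc ‖(a - b) / b‖ = ‖a / b - 1‖ := by rw [sub_div, div_self hb]
      _ ≤ ‖a / b‖ + ‖(1 : 𝕜)‖ := norm_sub_le _ _
      _ = 1 + ‖a‖ / ‖b‖ := by rw [norm_div, norm_one, add_comm]

lemma norm_div_norm_sub_le_one_add {E : Type*} [SeminormedAddGroup E] (a x : E) :
    ‖a‖ / ‖a - x‖ ≤ 1 + ‖x‖ / ‖a - x‖ := by
  rcases (norm_nonneg (a - x)).eq_or_lt with h | h
  · simp [← h]
  · rw [div_le_iff₀ h, add_mul, one_mul, div_mul_cancel₀ _ h.ne']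
    exact norm_le_norm_sub_add a x

lemma one_le_norm_ofReal_mul_add_ofReal_add_one {ν α : ℝ} {μ : ℂ}
    (hν : 0 ≤ ν) (hα : 0 ≤ α) (hμ : 0 ≤ μ.re) :
    1 ≤ ‖(ν : ℂ) * (μ + (α : ℂ)) + 1‖ := by
  refine le_trans ?_ (Complex.re_le_norm _)
  simp only [Complex.add_re, Complex.mul_re, Complex.ofReal_re, Complex.ofReal_im,
    Complex.add_im, zero_mul, sub_zero, Complex.one_re]
  nlinarith

/-- Bound on the resolvent factor: with `λ = ν(μ²-α²)` and `|μ-α| ≥ α/2`,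
`|(α-λ)/(λ+μ-α)| ≤ 1 + (1 + α/|μ-α|)/|ν(μ+α)+1| ≤ 4`. -/
theorem resolvent_factor_bound (ν α : ℝ) (μ : ℂ)
    (hν : 0 < ν) (hα : 0 < α) (hμ : 0 < μ.re)
    (h : α / 2 ≤ ‖μ - (α : ℂ)‖) :
    ‖((α : ℂ) - (ν : ℂ) * (μ ^ 2 - (α : ℂ) ^ 2)) /
        ((ν : ℂ) * (μ ^ 2 - (α : ℂ) ^ 2) + μ - (α : ℂ))‖ ≤
      1 + (1 + α / ‖μ - (α : ℂ)‖) *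
        (1 / ‖(ν : ℂ) * (μ + (α : ℂ)) + 1‖) ∧
    ‖((α : ℂ) - (ν : ℂ) * (μ ^ 2 - (α : ℂ) ^ 2)) /
        ((ν : ℂ) * (μ ^ 2 - (α : ℂ) ^ 2) + μ - (α : ℂ))‖ ≤ 4 := by
  set b : ℂ := μ - (α : ℂ)
  set c : ℂ := (ν : ℂ) * (μ + (α : ℂ)) + 1
  have hc : 1 ≤ ‖c‖ := one_le_norm_ofReal_mul_add_ofReal_add_one hν.le hα.le hμ.le
  have hb : α / ‖b‖ ≤ 2 := by
    rw [div_le_iff₀ (by linarith)]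
    linarith
  have hquot : ((α : ℂ) - (ν : ℂ) * (μ ^ 2 - (α : ℂ) ^ 2)) /
      ((ν : ℂ) * (μ ^ 2 - (α : ℂ) ^ 2) + μ - (α : ℂ)) = (μ - b * c) / (b * c) := by
    congr 1 <;> ring
  have hμb : ‖μ‖ / ‖b‖ ≤ 1 + α / ‖b‖ := by
    simpa [Complex.norm_real, abs_of_pos hα] using norm_div_norm_sub_le_one_add μ (α : ℂ)
  have first : ‖(μ - b * c) / (b * c)‖ ≤ 1 + (1 + α / ‖b‖) * (1 / ‖c‖) :=
    calc ‖(μ - b * c) / (b * c)‖ ≤ 1 + ‖μ‖ / ‖b * c‖ := norm_sub_div_le_one_add μ (b * c)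
      _ = 1 + ‖μ‖ / ‖b‖ * (1 / ‖c‖) := by rw [norm_mul]; ring
      _ ≤ 1 + (1 + α / ‖b‖) * (1 / ‖c‖) := by gcongr
  rw [hquot]
  refine ⟨first, first.trans ?_⟩
  have hc' : 1 / ‖c‖ ≤ 1 := (div_le_one (by linarith)).2 hc
  have : (1 + α / ‖b‖) * (1 / ‖c‖) ≤ 3 * 1 := by gcongr; linarith
  linarith
end

section
/- Let ν > 0, α > 0 with α²ν ≥ 1, a ≥ α/2, and let μ = a + ib for b ∈ ℝ, and λ = ν(μ² − α²). Suppose λ lies on the contour Γ₂ = {−(1/8)να² + ν(a² − b²) + 2νiab : b ∈ ℝ}, so that |λ| ≥ (1/8)α²ν. Then |α/(μ−α)| ≤ 8 + αν|μ|/|λ|, and moreover ν|μ|² ≤ 9|λ|, so that |α/(μ−α)| is bounded by a universal constant (using also α/a ≤ 2). -/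
/-!
Multiplying numerator and denominator by `ν(μ + α)` gives `α/(μ - α) = (α²ν + ανμ)/λ`, so
`|α/(μ - α)| ≤ (α²ν + αν|μ|)/|λ|`, and `α²ν ≤ 8|λ|` on `Γ₂`. Writing `νμ² = λ + να²` gives
`ν|μ|² ≤ |λ| + α²ν ≤ 9|λ|`; together with `α ≤ 2 Re μ ≤ 2|μ|` this bounds `αν|μ|/|λ|` by `18`.
-/

open Complex

lemma mul_norm_sq_le_norm_mul_sq_sub_sq_add {ν : ℝ} (hν : 0 ≤ ν) (α : ℝ) (μ : ℂ) :
    ν * ‖μ‖ ^ 2 ≤ ‖(ν : ℂ) * (μ ^ 2 - (α : ℂ) ^ 2)‖ + α ^ 2 * ν := by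
  calc ν * ‖μ‖ ^ 2 = ‖(ν : ℂ) * (μ ^ 2 - (α : ℂ) ^ 2) + (ν : ℂ) * (α : ℂ) ^ 2‖ := by
        rw [← mul_add, sub_add_cancel, norm_mul, norm_pow, norm_real, Real.norm_of_nonneg hν]
    _ ≤ ‖(ν : ℂ) * (μ ^ 2 - (α : ℂ) ^ 2)‖ + α ^ 2 * ν := by
        refine (norm_add_le _ _).trans_eq ?_
        simp [abs_of_nonneg hν, mul_comm]

lemma div_sub_eq_div_mul_sq_sub_sq {z μ ν : ℂ} (hν : ν ≠ 0) (hμz : μ + z ≠ 0) :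
    z / (μ - z) = (z ^ 2 * ν + z * ν * μ) / (ν * (μ ^ 2 - z ^ 2)) := by
  rw [← mul_div_mul_right z (μ - z) (mul_ne_zero hν hμz)]
  congr 1 <;> ring

lemma norm_div_sub_le_div_norm_mul_sq_sub_sq {ν α : ℝ} (hν : 0 < ν) (hα : 0 ≤ α) {μ : ℂ}
    (hμα : μ + α ≠ 0) :
    ‖(α : ℂ) / (μ - α)‖ ≤ (α ^ 2 * ν + α * ν * ‖μ‖) / ‖(ν : ℂ) * (μ ^ 2 - (α : ℂ) ^ 2)‖ := by
  rw [div_sub_eq_div_mul_sq_sub_sq (ofReal_ne_zero.mpr hν.ne') hμα, norm_div]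
  gcongr
  refine (norm_add_le _ _).trans_eq ?_
  simp [abs_of_pos hν, abs_of_nonneg hα]

theorem alpha_over_mu_minus_alpha_bound_general (ν α a b : ℝ) (μ lam : ℂ)
    (hν : 0 < ν) (hα : 0 < α) (ha : α / 2 ≤ a)
    (hμ : μ = (a : ℂ) + (b : ℂ) * Complex.I)
    (hlam : lam = (ν : ℂ) * (μ ^ 2 - (α : ℂ) ^ 2))
    (hlow : α ^ 2 * ν / 8 ≤ ‖lam‖) :
    ‖(α : ℂ) / (μ - (α : ℂ))‖ ≤ 8 + α * ν * ‖μ‖ / ‖lam‖ ∧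
    ν * ‖μ‖ ^ 2 ≤ 9 * ‖lam‖ ∧
    ‖(α : ℂ) / (μ - (α : ℂ))‖ ≤ 26 := by
  have hre : μ.re = a := by simp [hμ]
  have hlam_pos : 0 < ‖lam‖ := lt_of_lt_of_le (by positivity) hlow
  have hμα : μ + α ≠ 0 := fun h => by
    have : (μ + α).re = 0 := by rw [h, zero_re]
    rw [add_re, ofReal_re, hre] at this
    linarith
  have hfirst : ‖(α : ℂ) / (μ - α)‖ ≤ 8 + α * ν * ‖μ‖ / ‖lam‖ :=
    calc ‖(α : ℂ) / (μ - α)‖ ≤ (α ^ 2 * ν + α * ν * ‖μ‖) / ‖lam‖ :=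
          hlam ▸ norm_div_sub_le_div_norm_mul_sq_sub_sq hν hα.le hμα
      _ ≤ (8 * ‖lam‖ + α * ν * ‖μ‖) / ‖lam‖ := by gcongr (?_ + _) / _; linarith
      _ = 8 + α * ν * ‖μ‖ / ‖lam‖ := by rw [add_div, mul_div_cancel_right₀ _ hlam_pos.ne']
  have hmid : ν * ‖μ‖ ^ 2 ≤ 9 * ‖lam‖ := by
    linarith [hlam ▸ mul_norm_sq_le_norm_mul_sq_sub_sq_add hν.le α μ]
  have hαμ : α ≤ 2 * ‖μ‖ := by linarith [hre ▸ re_le_norm μ]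
  have hratio : α * ν * ‖μ‖ / ‖lam‖ ≤ 18 := by
    rw [div_le_iff₀ hlam_pos]
    nlinarith [norm_nonneg μ]
  exact ⟨hfirst, hmid, by linarith⟩

/-- High-frequency regime `α²ν ≥ 1` on the contour `Γ₂`: with `μ = a + ib`, `a ≥ α/2`,
`λ = ν(μ²-α²)` and `|λ| ≥ α²ν/8`, one has `|α/(μ-α)| ≤ 8 + αν|μ|/|λ|`, `ν|μ|² ≤ 9|λ|`,
and hence `|α/(μ-α)|` is bounded by a universal constant. -/
theorem alpha_over_mu_minus_alpha_bound (ν α a b : ℝ) (μ lam : ℂ)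
    (hν : 0 < ν) (hα : 0 < α) (h1 : 1 ≤ α ^ 2 * ν) (ha : α / 2 ≤ a)
    (hμ : μ = (a : ℂ) + (b : ℂ) * Complex.I)
    (hlam : lam = (ν : ℂ) * (μ ^ 2 - (α : ℂ) ^ 2))
    (hlow : α ^ 2 * ν / 8 ≤ ‖lam‖) :
    ‖(α : ℂ) / (μ - (α : ℂ))‖ ≤ 8 + α * ν * ‖μ‖ / ‖lam‖ ∧
    ν * ‖μ‖ ^ 2 ≤ 9 * ‖lam‖ ∧
    ‖(α : ℂ) / (μ - (α : ℂ))‖ ≤ 26 :=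
  alpha_over_mu_minus_alpha_bound_general ν α a b μ lam hν hα ha hμ hlam hlow
end

section
/- Let δ > 0, β₀ > 0, P > 1, and define the boundary layer norm ‖f‖_{σ,δ} = sup_{z∈Ω_σ} |f(z)| e^{β₀ Re z} (1 + δ^{-1} φ_P(δ^{-1}z))^{-1} with φ_P(z) = 1/(1+|Re z|^P) on the domain Ω_σ = {z ∈ ℂ : |Im z| < min{σ Re z, σ}}. If f is holomorphic on Ω_σ with ‖f‖_{σ,δ} < ∞, then for each 0 ≤ θ < σ, ∫_{∂Ω_θ} |f(z)| |dz| ≤ C ‖f‖_{σ,δ} for a constant C depending only on β₀, P, σ (and independent of δ ∈ (0,1]). In particular the boundary layer space embeds into the analytic L¹ space: ‖f‖_{L¹_σ} ≤ C ‖f‖_{σ,δ}. -/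
/-!
On `∂Ω_θ` the real part runs over `[0, ∞)`, each value twice, with arc-length density at most
`√(1 + σ²)`; so the contour integral of `|f|` is at most `2 (√(1 + σ²) + 1) M` times
`∫₀^∞ e^{-β₀ x} (1 + δ⁻¹ φ_P(x / δ)) dx`. Bounding `e^{-β₀ x} ≤ 1` in the boundary-layer term
and substituting `x = δ y` bounds this integral by `β₀⁻¹ + ∫₀^∞ φ_P`, uniformly in `δ`, and
`∫₀^∞ φ_P ≤ 1 + (P - 1)⁻¹` by comparison with `1` on `(0, 1]` and with `y^{-P}` on `(1, ∞)`.
-/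

open MeasureTheory Set Real

/-- The pencil-shaped complex domain `Ω_σ`. -/
def pencil (σ : ℝ) : Set ℂ := {z : ℂ | |z.im| < min (σ * z.re) σ}

/-- The boundary layer profile `φ_P`. -/
noncomputable def layerProfile (P y : ℝ) : ℝ := (1 + |y| ^ P)⁻¹

noncomputable def boundaryLayerWeight (β₀ P δ x : ℝ) : ℝ :=
  exp (-β₀ * x) * (1 + δ⁻¹ * layerProfile P (x / δ))

section layerProfile

variable {P : ℝ}

lemma layerProfile_pos (P y : ℝ) : 0 < layerProfile P y := by
  unfold layerProfile
  positivity

lemma layerProfile_le_one (P y : ℝ) : layerProfile P y ≤ 1 :=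
  inv_le_one_of_one_le₀ (le_add_of_nonneg_right (by positivity))

lemma layerProfile_le_rpow_neg {y : ℝ} (hy : 0 < y) : layerProfile P y ≤ y ^ (-P) := by
  rw [layerProfile, abs_of_pos hy, rpow_neg hy.le]
  exact inv_anti₀ (rpow_pos_of_pos hy P) (le_add_of_nonneg_left zero_le_one)

lemma continuous_layerProfile (hP : 0 ≤ P) : Continuous (layerProfile P) :=
  (continuous_const.add (continuous_abs.rpow_const fun _ => Or.inr hP)).inv₀
    fun y => (add_pos_of_pos_of_nonneg one_pos (rpow_nonneg (abs_nonneg y) P)).ne'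

lemma integrableOn_layerProfile_Ioc (hP : 0 ≤ P) : IntegrableOn (layerProfile P) (Ioc 0 1) :=
  (continuous_layerProfile hP).integrableOn_Icc.mono_set Ioc_subset_Icc_self

lemma integrableOn_layerProfile_Ioi_one (hP : 0 ≤ P) (hP' : 1 < P) :
    IntegrableOn (layerProfile P) (Ioi 1) := by
  refine (integrableOn_Ioi_rpow_of_lt (neg_lt_neg hP') one_pos).mono'
    (continuous_layerProfile hP).aestronglyMeasurable.restrict ?_
  filter_upwards [ae_restrict_mem measurableSet_Ioi] with y hy
  rw [norm_of_nonneg (layerProfile_pos P y).le]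
  exact layerProfile_le_rpow_neg (zero_lt_one.trans hy)

lemma integrableOn_layerProfile_Ioi (hP : 1 < P) : IntegrableOn (layerProfile P) (Ioi 0) := by
  rw [← Ioc_union_Ioi_eq_Ioi zero_le_one]
  exact (integrableOn_layerProfile_Ioc (by linarith)).union
    (integrableOn_layerProfile_Ioi_one (by linarith) hP)

lemma integral_layerProfile_Ioi_le (hP : 1 < P) :
    ∫ y in Ioi 0, layerProfile P y ≤ 1 + (P - 1)⁻¹ := by
  have h₁ := integrableOn_layerProfile_Ioc (P := P) (by linarith)
  have h₂ := integrableOn_layerProfile_Ioi_one (P := P) (by linarith) hP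
  rw [← Ioc_union_Ioi_eq_Ioi zero_le_one,
    setIntegral_union (Ioc_disjoint_Ioi le_rfl) measurableSet_Ioi h₁ h₂]
  gcongr
  · calc ∫ y in Ioc 0 1, layerProfile P y ≤ ∫ _ in Ioc (0 : ℝ) 1, (1 : ℝ) :=
          setIntegral_mono_on h₁ (integrableOn_const (by simp) (by simp)) measurableSet_Ioc
            fun y _ => layerProfile_le_one P y
      _ = 1 := by simp
  · calc ∫ y in Ioi 1, layerProfile P y ≤ ∫ y in Ioi (1 : ℝ), y ^ (-P) :=
          setIntegral_mono_on h₂ (integrableOn_Ioi_rpow_of_lt (neg_lt_neg hP) one_pos)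
            measurableSet_Ioi fun y hy => layerProfile_le_rpow_neg (zero_lt_one.trans hy)
      _ = (P - 1)⁻¹ := by
          rw [integral_Ioi_rpow_of_lt (neg_lt_neg hP) one_pos, one_rpow, neg_div,
            ← div_neg, neg_add, neg_neg, one_div, ← sub_eq_add_neg]

end layerProfile

section rescaling

variable {g : ℝ → ℝ} {δ : ℝ}

lemma integrableOn_Ioi_inv_mul_comp_div (hg : IntegrableOn g (Ioi 0)) (hδ : 0 < δ) :
    IntegrableOn (fun x => δ⁻¹ * g (x / δ)) (Ioi 0) := by
  simp_rw [div_eq_mul_inv]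
  exact ((integrableOn_Ioi_comp_mul_right_iff g 0 (inv_pos.2 hδ)).2
    (by rwa [zero_mul])).const_mul _

lemma integral_Ioi_inv_mul_comp_div (g : ℝ → ℝ) (hδ : 0 < δ) :
    ∫ x in Ioi 0, δ⁻¹ * g (x / δ) = ∫ y in Ioi 0, g y := by
  simp_rw [div_eq_mul_inv]
  rw [integral_const_mul, integral_comp_mul_right_Ioi g 0 (inv_pos.2 hδ), zero_mul, inv_inv,
    smul_eq_mul, inv_mul_cancel_left₀ hδ.ne']

end rescaling

section boundaryLayerWeight

variable {β₀ P δ : ℝ}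

lemma boundaryLayerWeight_pos (hδ : 0 < δ) (x : ℝ) : 0 < boundaryLayerWeight β₀ P δ x := by
  have := layerProfile_pos P (x / δ)
  unfold boundaryLayerWeight
  positivity

lemma boundaryLayerWeight_le (hβ : 0 ≤ β₀) (hδ : 0 < δ) {x : ℝ} (hx : 0 ≤ x) :
    boundaryLayerWeight β₀ P δ x ≤ exp (-β₀ * x) + δ⁻¹ * layerProfile P (x / δ) := by
  have hexp : exp (-β₀ * x) ≤ 1 := exp_le_one_iff.2 (by nlinarith)
  have := layerProfile_pos P (x / δ)
  rw [boundaryLayerWeight, mul_one_add]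
  exact add_le_add_right (mul_le_of_le_one_left (by positivity) hexp) _

lemma continuous_boundaryLayerWeight (hP : 0 ≤ P) : Continuous (boundaryLayerWeight β₀ P δ) :=
  (continuous_exp.comp (continuous_const.mul continuous_id)).mul <| continuous_const.add <|
    continuous_const.mul ((continuous_layerProfile hP).comp (continuous_id.div_const δ))

lemma integrableOn_boundaryLayerWeight (hβ : 0 < β₀) (hP : 1 < P) (hδ : 0 < δ) :
    IntegrableOn (boundaryLayerWeight β₀ P δ) (Ioi 0) := by
  refine ((exp_neg_integrableOn_Ioi 0 hβ).add
    (integrableOn_Ioi_inv_mul_comp_div (integrableOn_layerProfile_Ioi hP) hδ)).mono'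
    (continuous_boundaryLayerWeight (by linarith)).aestronglyMeasurable.restrict ?_
  filter_upwards [ae_restrict_mem measurableSet_Ioi] with x hx
  rw [norm_of_nonneg (boundaryLayerWeight_pos hδ x).le]
  exact boundaryLayerWeight_le hβ.le hδ (le_of_lt hx)

lemma integral_boundaryLayerWeight_le (hβ : 0 < β₀) (hP : 1 < P) (hδ : 0 < δ) :
    ∫ x in Ioi 0, boundaryLayerWeight β₀ P δ x ≤ β₀⁻¹ + (1 + (P - 1)⁻¹) := by
  have hexp := exp_neg_integrableOn_Ioi 0 hβ
  have hlayer := integrableOn_Ioi_inv_mul_comp_div (integrableOn_layerProfile_Ioi hP) hδ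
  calc ∫ x in Ioi 0, boundaryLayerWeight β₀ P δ x
      ≤ ∫ x in Ioi 0, (exp (-β₀ * x) + δ⁻¹ * layerProfile P (x / δ)) :=
        setIntegral_mono_on (integrableOn_boundaryLayerWeight hβ hP hδ) (hexp.add hlayer)
          measurableSet_Ioi fun x hx => boundaryLayerWeight_le hβ.le hδ (le_of_lt hx)
    _ = β₀⁻¹ + ∫ y in Ioi 0, layerProfile P y := by
        rw [integral_add hexp hlayer, integral_exp_mul_Ioi (neg_neg_of_pos hβ),
          integral_Ioi_inv_mul_comp_div _ hδ, mul_zero, exp_zero, div_neg, neg_div, neg_neg, one_div]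
    _ ≤ β₀⁻¹ + (1 + (P - 1)⁻¹) := by grw [integral_layerProfile_Ioi_le hP]

end boundaryLayerWeight

section contour

variable {σ θ : ℝ}

lemma mem_pencil_of_abs_im_le {z : ℂ} (hθ : θ < σ) (hre : 0 < z.re)
    (him : |z.im| ≤ θ * min z.re 1) : z ∈ pencil σ := by
  have hm : 0 < min z.re 1 := lt_min hre one_pos
  have hθ₀ : 0 ≤ θ := nonneg_of_mul_nonneg_left ((abs_nonneg _).trans him) hm
  calc |z.im| ≤ θ * min z.re 1 := him
    _ < σ * min z.re 1 := mul_lt_mul_of_pos_right hθ hm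
    _ = min (σ * z.re) σ := by rw [mul_min_of_nonneg _ _ (by linarith), mul_one]

lemma slant_mem_pencil (hθ₀ : 0 ≤ θ) (hθ : θ < σ) {x : ℝ} (hx : x ∈ Ioc 0 1) :
    (x : ℂ) * (1 + θ * Complex.I) ∈ pencil σ ∧ (x : ℂ) * (1 - θ * Complex.I) ∈ pencil σ := by
  have him : |x * θ| ≤ θ * min x 1 := by
    rw [abs_of_nonneg (mul_nonneg hx.1.le hθ₀), min_eq_left hx.2, mul_comm]
  constructor <;> refine mem_pencil_of_abs_im_le hθ (by simpa using hx.1) ?_ <;> simpa using him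

lemma ray_mem_pencil (hθ₀ : 0 ≤ θ) (hθ : θ < σ) {x : ℝ} (hx : 1 ≤ x) :
    (x : ℂ) + θ * Complex.I ∈ pencil σ ∧ (x : ℂ) - θ * Complex.I ∈ pencil σ := by
  have him : |θ| ≤ θ * min x 1 := by rw [abs_of_nonneg hθ₀, min_eq_right hx, mul_one]
  constructor <;> refine mem_pencil_of_abs_im_le hθ (by simpa using zero_lt_one.trans_le hx) ?_ <;> simpa using him

end contour

lemma setIntegral_le_mul_setIntegral_of_le {α : Type*} [MeasurableSpace α] {μ : Measure α}
    {F w : α → ℝ} {s t : Set α} {c : ℝ} (hs : MeasurableSet s) (hst : s ⊆ t)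
    (hw : IntegrableOn w t μ) (hw₀ : ∀ x, 0 ≤ w x) (hc : 0 ≤ c) (hF₀ : ∀ x, 0 ≤ F x)
    (hF : ∀ x ∈ s, F x ≤ c * w x) :
    ∫ x in s, F x ∂μ ≤ c * ∫ x in t, w x ∂μ :=
  calc ∫ x in s, F x ∂μ ≤ ∫ x in s, c * w x ∂μ :=
        integral_mono_of_nonneg (.of_forall hF₀) ((hw.mono_set hst).const_mul c)
          ((ae_restrict_iff' hs).2 (.of_forall hF))
    _ = c * ∫ x in s, w x ∂μ := integral_const_mul c _
    _ ≤ c * ∫ x in t, w x ∂μ :=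
        mul_le_mul_of_nonneg_left (setIntegral_mono_set hw (.of_forall hw₀) hst.eventuallyLE) hc

section contourIntegral

variable {σ θ M : ℝ} {f : ℂ → ℂ} {w : ℝ → ℝ}

lemma integral_slant_le (hθ₀ : 0 ≤ θ) (hθ : θ < σ) (hw : IntegrableOn w (Ioi 0))
    (hw₀ : ∀ x, 0 ≤ w x) (hM : 0 ≤ M) (hf : ∀ z ∈ pencil σ, ‖f z‖ ≤ M * w z.re) :
    ∫ x in Icc (0 : ℝ) 1,
        (‖f ((x : ℂ) * (1 + θ * Complex.I))‖ + ‖f ((x : ℂ) * (1 - θ * Complex.I))‖) *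
          sqrt (1 + θ ^ 2)
      ≤ 2 * M * sqrt (1 + σ ^ 2) * ∫ x in Ioi 0, w x := by
  rw [integral_Icc_eq_integral_Ioc]
  refine setIntegral_le_mul_setIntegral_of_le measurableSet_Ioc Ioc_subset_Ioi_self hw hw₀
    (by positivity) (fun x => by positivity) fun x hx => ?_
  obtain ⟨hz₁, hz₂⟩ := slant_mem_pencil hθ₀ hθ hx
  have hf₁ := hf _ hz₁
  have hf₂ := hf _ hz₂
  simp only [Complex.mul_re, Complex.ofReal_re, Complex.ofReal_im, Complex.add_re,
    Complex.sub_re, Complex.one_re, Complex.I_re, Complex.I_im, mul_zero,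
    sub_zero, zero_mul, add_zero, mul_one] at hf₁ hf₂
  have hsqrt : sqrt (1 + θ ^ 2) ≤ sqrt (1 + σ ^ 2) := sqrt_le_sqrt (by gcongr)
  calc (‖f ((x : ℂ) * (1 + θ * Complex.I))‖ + ‖f ((x : ℂ) * (1 - θ * Complex.I))‖) *
        sqrt (1 + θ ^ 2) ≤ (2 * M * w x) * sqrt (1 + σ ^ 2) :=
        mul_le_mul (by linarith) hsqrt (sqrt_nonneg _) (by have := hw₀ x; positivity)
    _ = 2 * M * sqrt (1 + σ ^ 2) * w x := by ring

lemma integral_ray_le (hθ₀ : 0 ≤ θ) (hθ : θ < σ) (hw : IntegrableOn w (Ioi 0))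
    (hw₀ : ∀ x, 0 ≤ w x) (hM : 0 ≤ M) (hf : ∀ z ∈ pencil σ, ‖f z‖ ≤ M * w z.re) :
    ∫ x in Ici (1 : ℝ), (‖f ((x : ℂ) + θ * Complex.I)‖ + ‖f ((x : ℂ) - θ * Complex.I)‖)
      ≤ 2 * M * ∫ x in Ioi 0, w x := by
  refine setIntegral_le_mul_setIntegral_of_le measurableSet_Ici
    (Ici_subset_Ioi.2 zero_lt_one) hw hw₀ (by positivity) (fun x => by positivity)
    fun x hx => ?_
  obtain ⟨hz₁, hz₂⟩ := ray_mem_pencil hθ₀ hθ hx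
  have hf₁ := hf _ hz₁
  have hf₂ := hf _ hz₂
  simp only [Complex.add_re, Complex.sub_re, Complex.ofReal_re, Complex.mul_re,
    Complex.ofReal_im, Complex.I_re, Complex.I_im, mul_zero, zero_mul, sub_zero,
    add_zero] at hf₁ hf₂
  linarith

end contourIntegral

theorem boundary_layer_L1_embedding_general (β₀ P σ : ℝ)
    (hβ : 0 < β₀) (hP : 1 < P) :
    ∃ C : ℝ, 0 < C ∧ ∀ δ : ℝ, 0 < δ → δ ≤ 1 → ∀ (f : ℂ → ℂ) (M : ℝ),
      DifferentiableOn ℂ f (pencil σ) →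
      (∀ z ∈ pencil σ, ‖f z‖ ≤
        M * Real.exp (-β₀ * z.re) * (1 + δ⁻¹ * (1 + |z.re / δ| ^ P)⁻¹)) →
      ∀ θ : ℝ, 0 ≤ θ → θ < σ →
        (∫ x in Set.Icc (0:ℝ) 1,
            (‖f ((x : ℂ) * (1 + (θ : ℂ) * Complex.I))‖ +
              ‖f ((x : ℂ) * (1 - (θ : ℂ) * Complex.I))‖) *
              Real.sqrt (1 + θ ^ 2))
          + (∫ x in Set.Ici (1:ℝ),
              (‖f ((x : ℂ) + (θ : ℂ) * Complex.I)‖ +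
                ‖f ((x : ℂ) - (θ : ℂ) * Complex.I)‖)) ≤ C * M := by
  set K := β₀⁻¹ + (1 + (P - 1)⁻¹)
  have hK : 0 < K := by have := inv_pos.2 (sub_pos.2 hP); positivity
  refine ⟨2 * (sqrt (1 + σ ^ 2) + 1) * K, by positivity, ?_⟩
  intro δ hδ _ f M _ hf θ hθ₀ hθ
  have hf' : ∀ z ∈ pencil σ, ‖f z‖ ≤ M * boundaryLayerWeight β₀ P δ z.re :=
    fun z hz => (hf z hz).trans_eq (mul_assoc _ _ _)
  have hM : 0 ≤ M := nonneg_of_mul_nonneg_left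
    ((norm_nonneg _).trans (hf' 1 (mem_pencil_of_abs_im_le hθ (by simp) (by simpa using hθ₀))))
    (boundaryLayerWeight_pos hδ 1)
  have hw := integrableOn_boundaryLayerWeight hβ hP hδ
  have hw₀ := fun x => (boundaryLayerWeight_pos (β₀ := β₀) (P := P) hδ x).le
  calc _ ≤ 2 * M * sqrt (1 + σ ^ 2) * (∫ x in Ioi 0, boundaryLayerWeight β₀ P δ x)
        + 2 * M * ∫ x in Ioi 0, boundaryLayerWeight β₀ P δ x :=
        add_le_add (integral_slant_le hθ₀ hθ hw hw₀ hM hf') (integral_ray_le hθ₀ hθ hw hw₀ hM hf')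
    _ = 2 * (sqrt (1 + σ ^ 2) + 1) * (∫ x in Ioi 0, boundaryLayerWeight β₀ P δ x) * M := by ring
    _ ≤ 2 * (sqrt (1 + σ ^ 2) + 1) * K * M := by
        grw [integral_boundaryLayerWeight_le hβ hP hδ]

/-- Embedding of the boundary layer space into the analytic `L¹` space: if `f` is holomorphic
on `Ω_σ` and `|f z| ≤ M e^{-β₀ Re z}(1 + δ⁻¹ φ_P(δ⁻¹ z))` on `Ω_σ`, then for every
`0 ≤ θ < σ` the contour integral of `|f|` over `∂Ω_θ` (two slanted segments for `0 ≤ x ≤ 1`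
and two horizontal rays for `x ≥ 1`) is bounded by `C M` with `C = C(β₀, P, σ)`,
uniformly in `δ ∈ (0,1]`. -/
theorem boundary_layer_L1_embedding (β₀ P σ : ℝ)
    (hβ : 0 < β₀) (hP : 1 < P) (hσ : 0 < σ) :
    ∃ C : ℝ, 0 < C ∧ ∀ δ : ℝ, 0 < δ → δ ≤ 1 → ∀ (f : ℂ → ℂ) (M : ℝ),
      DifferentiableOn ℂ f (pencil σ) →
      (∀ z ∈ pencil σ, ‖f z‖ ≤
        M * Real.exp (-β₀ * z.re) * (1 + δ⁻¹ * (1 + |z.re / δ| ^ P)⁻¹)) →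
      ∀ θ : ℝ, 0 ≤ θ → θ < σ →
        (∫ x in Set.Icc (0:ℝ) 1,
            (‖f ((x : ℂ) * (1 + (θ : ℂ) * Complex.I))‖ +
              ‖f ((x : ℂ) * (1 - (θ : ℂ) * Complex.I))‖) *
              Real.sqrt (1 + θ ^ 2))
          + (∫ x in Set.Ici (1:ℝ),
              (‖f ((x : ℂ) + (θ : ℂ) * Complex.I)‖ +
                ‖f ((x : ℂ) - (θ : ℂ) * Complex.I)‖)) ≤ C * M :=
  boundary_layer_L1_embedding_general β₀ P σ hβ hP
end
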